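/- arXiv:1712.10123 — 6 statements merged into one kernel-verified Lean document; each statement's English description precedes it below -/
import Mathlib

section
/- In a finite lattice, if an element x satisfies (y ∨ x) ∧ z = y ∨ (x ∧ z) for all cover relations y ⋖ z, then x is left modular, i.e., (y ∨ x) ∧ z = y ∨ (x ∧ z) for all pairs y ≤ z. -/
/-!
For `y ≤ z` one always has `b := y ⊔ (x ⊓ z) ≤ (y ⊔ x) ⊓ z =: a`. If `b < a`, finiteness gives a
cover `b ⋖ c` with `c ≤ a`. Since `b ⊔ x = y ⊔ x ≥ c` and `x ⊓ c ≤ x ⊓ z ≤ b`, the identity at the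
cover `b ⋖ c` would read `c = b`, which is absurd.
-/

section LeftModular

variable {L : Type*} [Lattice L] {x y z c : L}

theorem sup_inf_le_sup_inf_of_le (hyz : y ≤ z) : y ⊔ (x ⊓ z) ≤ (y ⊔ x) ⊓ z :=
  sup_le (le_inf le_sup_left hyz) (inf_le_inf_right z le_sup_right)

theorem sup_inf_ne_of_lt_of_le_sup_inf (hlt : y ⊔ (x ⊓ z) < c) (hle : c ≤ (y ⊔ x) ⊓ z) :
    (y ⊔ (x ⊓ z) ⊔ x) ⊓ c ≠ y ⊔ (x ⊓ z) ⊔ (x ⊓ c) := by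
  have hsup : y ⊔ (x ⊓ z) ⊔ x = y ⊔ x := by
    rw [sup_assoc, sup_comm (x ⊓ z) x, sup_inf_self]
  have hleft : (y ⊔ (x ⊓ z) ⊔ x) ⊓ c = c := by
    rw [hsup]
    exact inf_eq_right.mpr (hle.trans inf_le_left)
  have hright : y ⊔ (x ⊓ z) ⊔ (x ⊓ c) = y ⊔ (x ⊓ z) :=
    sup_eq_left.mpr ((inf_le_inf_left x (hle.trans inf_le_right)).trans le_sup_right)
  rw [hleft, hright]
  exact hlt.ne'

end LeftModular

/-- If an element `x` of a finite lattice satisfies the left modular identity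
`(y ⊔ x) ⊓ z = y ⊔ (x ⊓ z)` for all cover relations `y ⋖ z`, then it satisfies it
for all pairs `y ≤ z`, i.e. `x` is left modular. -/
theorem leftModular_of_covers {L : Type*} [Lattice L] [Fintype L] (x : L)
    (h : ∀ y z : L, y ⋖ z → (y ⊔ x) ⊓ z = y ⊔ (x ⊓ z)) :
    ∀ y z : L, y ≤ z → (y ⊔ x) ⊓ z = y ⊔ (x ⊓ z) := by
  intro y z hyz
  by_contra hne
  have hlt : y ⊔ (x ⊓ z) < (y ⊔ x) ⊓ z :=
    (sup_inf_le_sup_inf_of_le hyz).lt_of_ne (Ne.symm hne)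
  obtain ⟨c, hcov, hc⟩ := exists_covBy_le_of_lt hlt
  exact sup_inf_ne_of_lt_of_le_sup_inf hcov.lt hc (h _ c hcov)
end

section
/- If L is an extremal lattice and L' is a lattice quotient of L, then L' is extremal. -/
/-!
Fix a longest chain `c 0 < ⋯ < c n` of the extremal lattice `L`. Every step of a strict chain is
witnessed by a join-irreducible lying below its top and not below its bottom, and distinct steps
get distinct witnesses; so chains are never longer than the number of join-irreducibles, and in
`L` the witnesses of the `n` steps are exactly its `n` join-irreducibles. A join-irreducible `a'`
of the quotient lifts to the least element `m` of its fibre, which is join-irreducible, hence the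
witness of some step of `c`; that step is not collapsed by `f`, since otherwise `m ⊓ c i` would be
a smaller element of the fibre. The non-collapsed steps of `f ∘ c` give a chain in `L'` of length
at least its number of join-irreducibles, so the two agree; dually for meet-irreducibles.
-/

/-- A finite lattice is *extremal* if its length `n` equals its number of
join-irreducible elements and its number of meet-irreducible elements. -/
def IsExtremalLattice (L : Type*) [Lattice L] [Fintype L] : Prop :=
  ∃ n : ℕ, (∃ c : Fin (n + 1) → L, StrictMono c) ∧
    (∀ (m : ℕ) (c : Fin (m + 1) → L), StrictMono c → m ≤ n) ∧
    Nat.card {a : L // SupIrred a} = n ∧ Nat.card {a : L // InfIrred a} = n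

open Function OrderDual

section Chains

variable {P : Type*} [Preorder P] {n : ℕ}

lemma StrictMono.toDual_comp_rev {c : Fin n → P} (hc : StrictMono c) :
    StrictMono fun i : Fin n => toDual (c i.rev) :=
  fun _ _ h => hc (Fin.rev_lt_rev.2 h)

lemma exists_strictMono_of_steps {d : Fin (n + 1) → P} (hd : Monotone d) (T : Finset (Fin n))
    (hT : ∀ i ∈ T, d i.castSucc < d i.succ) : ∃ e : Fin (T.card + 1) → P, StrictMono e := by
  set t := T.orderEmbOfFin rfl
  have hlt : ∀ k, d (t k).castSucc < d (t k).succ := fun k => hT _ (T.orderEmbOfFin_mem rfl k)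
  refine ⟨Fin.cons (d 0) fun k => d (t k).succ, Fin.strictMono_iff_lt_succ.2 fun k => ?_⟩
  rw [Fin.cons_succ]
  refine lt_of_le_of_lt ?_ (hlt k)
  rcases Fin.eq_zero_or_eq_succ k.castSucc with h | ⟨k', h⟩
  · rw [h, Fin.cons_zero]
    exact hd (Fin.zero_le _)
  · have hk' : k' < k := Fin.castSucc_lt_castSucc_iff.1 (h ▸ k'.castSucc_lt_succ)
    rw [h, Fin.cons_succ]
    exact hd (Fin.succ_le_castSucc_iff.2 (t.strictMono hk'))

end Chains

section Irreducible

variable {M : Type*} [Lattice M] {n : ℕ}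

lemma exists_supIrred_le_not_le [Finite M] {x y : M} (h : ¬y ≤ x) :
    ∃ a, SupIrred a ∧ a ≤ y ∧ ¬a ≤ x := by
  have : Nonempty M := ⟨x⟩
  cases nonempty_fintype M
  let := Fintype.toOrderBot M
  obtain ⟨s, rfl, hs⟩ := exists_supIrred_decomposition y
  by_contra! H
  exact h (Finset.sup_le fun a ha => H a (hs ha) (Finset.le_sup (f := id) ha))

lemma exists_supIrred_steps [Finite M] {c : Fin (n + 1) → M} (hc : StrictMono c) :
    ∃ j : Fin n → {a : M // SupIrred a},
      Injective j ∧ ∀ i, (j i : M) ≤ c i.succ ∧ ¬(j i : M) ≤ c i.castSucc := by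
  have hstep (i : Fin n) : ¬c i.succ ≤ c i.castSucc := (hc i.castSucc_lt_succ).not_ge
  choose j hj using fun i => exists_supIrred_le_not_le (hstep i)
  refine ⟨fun i => ⟨j i, (hj i).1⟩, .of_lt_imp_ne fun i i' hlt heq => ?_, fun i => (hj i).2⟩
  have hji : j i = j i' := congrArg Subtype.val heq
  exact (hj i').2.2 (hji ▸ (hj i).2.1.trans (hc.monotone (Fin.succ_le_castSucc_iff.2 hlt)))

lemma card_le_card_supIrred [Finite M] {c : Fin (n + 1) → M} (hc : StrictMono c) :
    n ≤ Nat.card {a : M // SupIrred a} := by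
  obtain ⟨j, hj, -⟩ := exists_supIrred_steps hc
  simpa using Nat.card_le_card_of_injective j hj

lemma card_supIrred_orderDual :
    Nat.card {a : Mᵒᵈ // SupIrred a} = Nat.card {a : M // InfIrred a} :=
  Nat.card_congr (Equiv.subtypeEquiv ofDual fun _ => infIrred_ofDual.symm)

lemma card_le_card_infIrred [Finite M] {c : Fin (n + 1) → M} (hc : StrictMono c) :
    n ≤ Nat.card {a : M // InfIrred a} :=
  card_supIrred_orderDual (M := M) ▸ card_le_card_supIrred hc.toDual_comp_rev

end Irreducible

section Quotient

variable {L L' : Type*} [Lattice L] [Lattice L']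

lemma InfClosed.exists_isLeast {s : Set L} (hs : InfClosed s) (hfin : s.Finite)
    (hne : s.Nonempty) : ∃ m, IsLeast s m := by
  obtain ⟨m, hm⟩ := hfin.exists_minimal hne
  exact ⟨m, hm.prop, fun x hx => (hm.le_of_le (hs hm.prop hx) inf_le_left).trans inf_le_right⟩

variable {F : Type*} [FunLike F L L']

lemma exists_isLeast_preimage [LatticeHomClass F L L'] [Finite L] {f : F} (hf : Surjective f)
    (a' : L') : ∃ m, IsLeast (f ⁻¹' {a'}) m :=
  (infClosed_singleton.preimage f).exists_isLeast (Set.toFinite _) (hf a')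

lemma SupIrred.of_isLeast_preimage [LatticeHomClass F L L'] {f : F} (hf : Surjective f)
    {a' : L'} (ha' : SupIrred a') {m : L} (hm : IsLeast (f ⁻¹' {a'}) m) : SupIrred m := by
  have hfm : f m = a' := hm.1
  refine ⟨fun hmin => ha'.1 fun b' _ => ?_, fun b c hbc => ?_⟩
  · obtain ⟨b, rfl⟩ := hf b'
    calc a' = f m := hfm.symm
      _ ≤ f (b ⊓ m) := OrderHomClass.mono f (hmin inf_le_right)
      _ ≤ f b := OrderHomClass.mono f inf_le_left
  · have hbc' : f b ⊔ f c = a' := by rw [← map_sup, hbc, hfm]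
    rcases ha'.2 hbc' with h | h
    · exact .inl (le_antisymm (hbc ▸ le_sup_left) (hm.2 h))
    · exact .inr (le_antisymm (hbc ▸ le_sup_right) (hm.2 h))

lemma map_ne_map_of_isLeast_preimage [InfHomClass F L L'] {f : F} {a' : L'} {a b m : L}
    (hm : IsLeast (f ⁻¹' {a'}) m) (hmb : m ≤ b) (hma : ¬m ≤ a) : f a ≠ f b := by
  intro hab
  have : f (m ⊓ a) = a' := by rw [map_inf, hab, ← map_inf, inf_eq_left.2 hmb]; exact hm.1
  exact hma ((hm.2 this).trans inf_le_right)

theorem exists_strictMono_card_supIrred_of_surjective [Finite L] [Finite L']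
    (f : LatticeHom L L') (hf : Surjective f) {n : ℕ} {c : Fin (n + 1) → L}
    (hc : StrictMono c) (hcard : Nat.card {a : L // SupIrred a} = n) :
    ∃ e : Fin (Nat.card {a : L' // SupIrred a} + 1) → L', StrictMono e := by
  classical
  cases nonempty_fintype L'
  obtain ⟨j, hj, hjc⟩ := exists_supIrred_steps hc
  -- As `L` has only `n` join-irreducibles, every one of them witnesses a step of `c`.
  let J := Equiv.ofBijective j
    ((Nat.bijective_iff_injective_and_card j).2 ⟨hj, by simp [hcard]⟩)
  choose m hm using exists_isLeast_preimage hf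
  let φ (a' : {a : L' // SupIrred a}) : Fin n :=
    J.symm ⟨m a', .of_isLeast_preimage hf a'.2 (hm a')⟩
  have hjφ a' : (j (φ a') : L) = m a' := congrArg Subtype.val (J.apply_symm_apply _)
  have hfm a' : f (m a') = a' := (hm a').1
  have hφ : Injective φ := fun a' b' h =>
    Subtype.ext (by rw [← hfm a', ← hfm b', ← hjφ, ← hjφ, h])
  have hstep a' : f (c (φ a').castSucc) < f (c (φ a').succ) := by
    obtain ⟨hle, hnle⟩ := hjc (φ a')
    rw [hjφ] at hle hnle
    exact (OrderHomClass.mono f (hc.monotone (Fin.castSucc_le_succ _))).lt_of_ne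
      (map_ne_map_of_isLeast_preimage (hm a') hle hnle)
  have := exists_strictMono_of_steps ((OrderHomClass.mono f).comp hc.monotone)
    (Finset.univ.image φ) fun _ hi => by
      obtain ⟨a', -, rfl⟩ := Finset.mem_image.1 hi
      exact hstep a'
  rwa [Finset.card_image_of_injective _ hφ, Finset.card_univ, ← Nat.card_eq_fintype_card] at this

theorem exists_strictMono_card_infIrred_of_surjective [Finite L] [Finite L']
    (f : LatticeHom L L') (hf : Surjective f) {n : ℕ} {c : Fin (n + 1) → L}
    (hc : StrictMono c) (hcard : Nat.card {a : L // InfIrred a} = n) :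
    ∃ e : Fin (Nat.card {a : L' // InfIrred a} + 1) → L', StrictMono e := by
  have hf' : Surjective f.dual := fun a => (hf (ofDual a)).imp fun _ h => congrArg toDual h
  have := exists_strictMono_card_supIrred_of_surjective f.dual hf' hc.toDual_comp_rev
    (card_supIrred_orderDual.trans hcard)
  rw [card_supIrred_orderDual] at this
  obtain ⟨e, he⟩ := this
  exact ⟨_, he.toDual_comp_rev⟩

end Quotient

/-- A lattice quotient of `L` is modelled as the codomain of a surjective lattice homomorphism. -/
theorem isExtremalLattice_of_quotient {L L' : Type*} [Lattice L] [Fintype L]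
    [Lattice L'] [Fintype L'] (f : LatticeHom L L') (hf : Function.Surjective f)
    (hL : IsExtremalLattice L) : IsExtremalLattice L' := by
  obtain ⟨n, ⟨c, hc⟩, -, hsup, hinf⟩ := hL
  obtain ⟨e, he⟩ := exists_strictMono_card_supIrred_of_surjective f hf hc hsup
  obtain ⟨e', he'⟩ := exists_strictMono_card_infIrred_of_surjective f hf hc hinf
  exact ⟨_, ⟨e, he⟩, fun _ _ hc' => card_le_card_supIrred hc', rfl,
    le_antisymm (card_le_card_supIrred he') (card_le_card_infIrred he)⟩
end

section
/- The spine of a finite extremal lattice L (the set of elements lying on some maximal-length chain) is a sublattice of L, closed under meet and join, and is a distributive lattice isomorphic to the lattice of order ideals of the Galois poset P(L). -/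
/-- An element `x` of a lattice is *left modular* if `(y ⊔ x) ⊓ z = y ⊔ (x ⊓ z)`
for all `y ≤ z`. -/
def LeftModular {L : Type*} [Lattice L] (x : L) : Prop :=
  ∀ y z : L, y ≤ z → (y ⊔ x) ⊓ z = y ⊔ (x ⊓ z)

/-- The data of an extremal lattice of length `n` together with a fixed
maximal-length chain `x₀ ⋖ ⋯ ⋖ xₙ` and the induced numberings of the
join-irreducibles `j₁, …, jₙ` and meet-irreducibles `m₁, …, mₙ`. -/
structure ExtremalChainData (L : Type*) [Lattice L] [Fintype L] [BoundedOrder L]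
    (n : ℕ) where
  x : Fin (n + 1) → L
  x_strictMono : StrictMono x
  x_bot : x 0 = ⊥
  x_top : x (Fin.last n) = ⊤
  maxlen : ∀ (m : ℕ) (c : Fin (m + 1) → L), StrictMono c → m ≤ n
  j : Fin n → L
  m : Fin n → L
  j_irr : ∀ i, SupIrred (j i)
  m_irr : ∀ i, InfIrred (m i)
  j_inj : Function.Injective j
  m_inj : Function.Injective m
  j_surj : ∀ a : L, SupIrred a → a ∈ Set.range j
  m_surj : ∀ a : L, InfIrred a → a ∈ Set.range m
  x_eq_sup : ∀ i : Fin (n + 1),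
    x i = (Finset.univ.filter fun k : Fin n => (k : ℕ) < (i : ℕ)).sup j
  x_eq_inf : ∀ i : Fin (n + 1),
    x i = (Finset.univ.filter fun k : Fin n => (i : ℕ) ≤ (k : ℕ)).inf m

namespace ExtremalChainData

variable {L : Type*} [Lattice L] [Fintype L] [BoundedOrder L] {n : ℕ}

/-- `x_J`: the set of indices of join-irreducibles lying below `a`. -/
def setJ (D : ExtremalChainData L n) (a : L) : Set (Fin n) := {i | D.j i ≤ a}

/-- `x_M`: the set of indices of meet-irreducibles lying above `a`. -/
def setM (D : ExtremalChainData L n) (a : L) : Set (Fin n) := {i | a ≤ D.m i}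

/-- The Galois graph: a directed edge `i → k` when `jᵢ ≰ m_k` and `i ≠ k`. -/
def galoisEdge (D : ExtremalChainData L n) (i k : Fin n) : Prop :=
  ¬ D.j i ≤ D.m k ∧ i ≠ k

/-- The left modular labelling: `i` is the label of the cover `y ⋖ z` iff `i` is
minimal with `y ⊔ (xᵢ ⊓ z) = z`. -/
def IsLabel (D : ExtremalChainData L n) (y z : L) (i : Fin n) : Prop :=
  y ⊔ (D.x i.succ ⊓ z) = z ∧ ∀ k : Fin n, y ⊔ (D.x k.succ ⊓ z) = z → i ≤ k

open scoped Classical in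
/-- `D^γ(a)`: the set of labels of cover relations below `a`. -/
noncomputable def downLabels (D : ExtremalChainData L n) (a : L) : Finset (Fin n) :=
  Finset.univ.filter fun i => ∃ y, y ⋖ a ∧ D.IsLabel y a i

open scoped Classical in
/-- `U^γ(a)`: the set of labels of cover relations above `a`. -/
noncomputable def upLabels (D : ExtremalChainData L n) (a : L) : Finset (Fin n) :=
  Finset.univ.filter fun i => ∃ z, a ⋖ z ∧ D.IsLabel a z i

/-- The fixed chain consists of left modular elements, i.e. the lattice is trim. -/
def IsTrim (D : ExtremalChainData L n) : Prop := ∀ i, LeftModular (D.x i)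

end ExtremalChainData

open ExtremalChainData

/-- The spine of a lattice: elements lying on some chain of maximal length. -/
def spine (L : Type*) [Lattice L] [Fintype L] [BoundedOrder L] (n : ℕ) : Set L :=
  {a | ∃ c : Fin (n + 1) → L, StrictMono c ∧ ∃ i, c i = a}

/-- Lower sets of the Galois poset `P(L)`, the transitive closure of the Galois
graph (where `i → k` means `i` is above `k`). -/
def IsGaloisLowerSet {L : Type*} [Lattice L] [Fintype L] [BoundedOrder L] {n : ℕ}
    (D : ExtremalChainData L n) (S : Set (Fin n)) : Prop :=
  ∀ i ∈ S, ∀ k, Relation.TransGen D.galoisEdge i k → k ∈ S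

/-!
Every element `a` is the join of the join-irreducibles below it, so `a ↦ J(a) = {i | jᵢ ≤ a}` is
an order embedding into the subsets of `[n]`; dually for `M(a) = {k | a ≤ m_k}`. Since `jᵢ ≤ m_k`
for `i < k` but `jᵢ ≰ mᵢ`, the sets `J(a)` and `M(a)` are disjoint, and counting along a chain of
length `n` through `a` shows that they cover `[n]` when `a` is on the spine; as an edge `i → k`
means `jᵢ ≰ m_k`, `J(a)` is then a Galois lower set. Conversely, for a lower set `S` the join
`⋁_{i ∈ S} jᵢ` lies below every `m_k` with `k ∉ S`, so `J(⋁_{i ∈ S} jᵢ) = S`. Adding indices one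
at a time, smallest first, from `∅` to `S` and then from `S` to `[n]` keeps the set lower (edges
decrease indices), which gives a chain of length `n` through `⋁_{i ∈ S} jᵢ`. Hence `J` identifies
the spine with the Galois lower sets, and these are closed under union and intersection.
-/

theorem Fin.val_le_of_strictMono {n : ℕ} {f : Fin (n + 1) → ℕ} (hf : StrictMono f)
    (i : Fin (n + 1)) : (i : ℕ) ≤ f i := by
  induction i using Fin.induction with
  | zero => exact Nat.zero_le _
  | succ i ih =>
    have := hf i.castSucc_lt_succ
    simp only [Fin.val_succ, Fin.val_castSucc] at ih ⊢
    omega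

theorem mem_spine_of_mem_ltSeries {L : Type*} [Lattice L] [Fintype L] [BoundedOrder L]
    {n : ℕ} (p : LTSeries L) (hp : p.length = n) {a : L} (ha : a ∈ p) : a ∈ spine L n := by
  obtain ⟨i, rfl⟩ := ha
  exact ⟨fun t => p (Fin.cast (by rw [hp]) t), p.strictMono.comp fun _ _ h => h,
    Fin.cast (by rw [hp]) i, by simp⟩

namespace ExtremalChainData

variable {L : Type*} [Lattice L] [Fintype L] [BoundedOrder L] {n : ℕ}
  (D : ExtremalChainData L n)

open Finset

theorem j_le_x_succ (i : Fin n) : D.j i ≤ D.x i.succ := by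
  rw [D.x_eq_sup]
  exact le_sup (by simp)

theorem x_castSucc_le_m (i : Fin n) : D.x i.castSucc ≤ D.m i := by
  rw [D.x_eq_inf]
  exact inf_le (by simp)

theorem j_le_m_of_lt {i k : Fin n} (h : i < k) : D.j i ≤ D.m k :=
  (D.j_le_x_succ i).trans <|
    (D.x_strictMono.monotone (Fin.succ_le_castSucc_iff.2 h)).trans (D.x_castSucc_le_m k)

theorem j_not_le_m (i : Fin n) : ¬ D.j i ≤ D.m i := by
  intro h
  have hle : ∀ k l : Fin n, k ≤ i → i ≤ l → D.j k ≤ D.m l := by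
    intro k l hki hil
    rcases hki.lt_or_eq with hki | rfl
    · exact D.j_le_m_of_lt (hki.trans_le hil)
    rcases hil.lt_or_eq with hil | rfl
    · exact D.j_le_m_of_lt hil
    · exact h
  have : D.x i.succ ≤ D.x i.castSucc := by
    rw [D.x_eq_sup, D.x_eq_inf]
    refine Finset.sup_le fun k hk => Finset.le_inf fun l hl => hle k l ?_ ?_ <;>
      simp only [mem_filter, mem_univ, true_and, Fin.val_succ, Fin.val_castSucc] at hk hl <;>
      omega
  exact this.not_gt (D.x_strictMono i.castSucc_lt_succ)

theorem lt_of_galoisEdge {i k : Fin n} (h : D.galoisEdge i k) : k < i :=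
  lt_of_le_of_ne (not_lt.1 fun hik => h.1 (D.j_le_m_of_lt hik)) h.2.symm

end ExtremalChainData

section GaloisLowerSet

variable {L : Type*} [Lattice L] [Fintype L] [BoundedOrder L] {n : ℕ}
  {D : ExtremalChainData L n} {S T : Set (Fin n)}

theorem isGaloisLowerSet_iff :
    IsGaloisLowerSet D S ↔ ∀ i ∈ S, ∀ k, D.galoisEdge i k → k ∈ S := by
  refine ⟨fun hS i hi k hik => hS i hi k (.single hik), fun hS i hi k hik => ?_⟩
  induction hik with
  | single h => exact hS i hi _ h
  | tail _ h ih => exact hS _ ih _ h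

theorem IsGaloisLowerSet.union (hS : IsGaloisLowerSet D S) (hT : IsGaloisLowerSet D T) :
    IsGaloisLowerSet D (S ∪ T) := by
  rintro i (hi | hi) k hik
  exacts [.inl (hS i hi k hik), .inr (hT i hi k hik)]

theorem IsGaloisLowerSet.inter (hS : IsGaloisLowerSet D S) (hT : IsGaloisLowerSet D T) :
    IsGaloisLowerSet D (S ∩ T) :=
  fun i hi k hik => ⟨hS i hi.1 k hik, hT i hi.2 k hik⟩

theorem IsGaloisLowerSet.insert (hS : IsGaloisLowerSet D S)
    (hT : IsGaloisLowerSet D T) {i : Fin n} (hi : i ∈ T) (hbelow : ∀ k ∈ T, k < i → k ∈ S) :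
    IsGaloisLowerSet D (insert i S) := by
  rw [isGaloisLowerSet_iff] at hS hT ⊢
  rintro l (rfl | hl) k hlk
  · exact .inr (hbelow k (hT l hi k hlk) (D.lt_of_galoisEdge hlk))
  · exact .inr (hS l hl k hlk)

end GaloisLowerSet

namespace ExtremalChainData

variable {L : Type*} [Lattice L] [Fintype L] [BoundedOrder L] {n : ℕ}
  (D : ExtremalChainData L n)

open Finset

open scoped Classical in
noncomputable def jBelow (a : L) : Finset (Fin n) := {i | D.j i ≤ a}

open scoped Classical in
noncomputable def mAbove (a : L) : Finset (Fin n) := {i | a ≤ D.m i}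

variable {D}

@[simp]
theorem mem_jBelow {a : L} {i : Fin n} : i ∈ D.jBelow a ↔ D.j i ≤ a := by
  simp [jBelow]

@[simp]
theorem mem_mAbove {a : L} {i : Fin n} : i ∈ D.mAbove a ↔ a ≤ D.m i := by
  simp [mAbove]

variable (D)

theorem sup_jBelow (a : L) : (D.jBelow a).sup D.j = a := by
  obtain ⟨s, rfl, hs⟩ := exists_supIrred_decomposition a
  refine le_antisymm (Finset.sup_le fun i hi => mem_jBelow.1 hi) (Finset.sup_le fun b hb => ?_)
  obtain ⟨i, rfl⟩ := D.j_surj b (hs hb)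
  exact le_sup (f := D.j) (mem_jBelow.2 (le_sup (f := id) hb))

theorem inf_mAbove (a : L) : (D.mAbove a).inf D.m = a := by
  obtain ⟨s, rfl, hs⟩ := exists_infIrred_decomposition a
  refine le_antisymm (Finset.le_inf fun b hb => ?_) (Finset.le_inf fun i hi => mem_mAbove.1 hi)
  obtain ⟨i, rfl⟩ := D.m_surj b (hs hb)
  exact inf_le (f := D.m) (mem_mAbove.2 (inf_le (f := id) hb))

theorem jBelow_subset_jBelow_iff {a b : L} : D.jBelow a ⊆ D.jBelow b ↔ a ≤ b :=
  ⟨fun h => D.sup_jBelow a ▸ D.sup_jBelow b ▸ sup_mono h,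
    fun h _ hi => mem_jBelow.2 ((mem_jBelow.1 hi).trans h)⟩

theorem mAbove_subset_mAbove_iff {a b : L} : D.mAbove b ⊆ D.mAbove a ↔ a ≤ b :=
  ⟨fun h => D.inf_mAbove a ▸ D.inf_mAbove b ▸ inf_mono h,
    fun h _ hi => mem_mAbove.2 (h.trans (mem_mAbove.1 hi))⟩

theorem strictMono_jBelow : StrictMono D.jBelow :=
  strictMono_of_le_iff_le fun _ _ => D.jBelow_subset_jBelow_iff.symm

theorem strictAnti_mAbove : StrictAnti D.mAbove :=
  strictAnti_of_le_iff_le fun _ _ => D.mAbove_subset_mAbove_iff.symm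

theorem disjoint_jBelow_mAbove (a : L) : Disjoint (D.jBelow a) (D.mAbove a) :=
  disjoint_left.2 fun i hJ hM => D.j_not_le_m i ((mem_jBelow.1 hJ).trans (mem_mAbove.1 hM))

/-- Along a chain of length `n`, `#J` grows and `#M` shrinks at every step, so at position `t`
`#J ≥ t` and `#M ≥ n - t`; disjointness then leaves no room outside `J ∪ M`. -/
theorem jBelow_union_mAbove_of_mem_spine {a : L} (ha : a ∈ spine L n) :
    D.jBelow a ∪ D.mAbove a = univ := by
  obtain ⟨c, hc, t, rfl⟩ := ha
  have hJ : (t : ℕ) ≤ #(D.jBelow (c t)) :=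
    Fin.val_le_of_strictMono (card_strictMono.comp (D.strictMono_jBelow.comp hc)) t
  have hM : (t.rev : ℕ) ≤ #(D.mAbove (c t)) := by
    simpa using Fin.val_le_of_strictMono
      (card_strictMono.comp ((D.strictAnti_mAbove.comp_strictMono hc).comp
        Fin.rev_strictAnti)) t.rev
  have hcard := card_union_of_disjoint (D.disjoint_jBelow_mAbove (c t))
  have hle := card_le_univ (D.jBelow (c t) ∪ D.mAbove (c t))
  rw [Fin.val_rev] at hM
  rw [Fintype.card_fin] at hle
  apply eq_univ_of_card
  rw [Fintype.card_fin]
  omega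

theorem isGaloisLowerSet_jBelow_of_mem_spine {a : L} (ha : a ∈ spine L n) :
    IsGaloisLowerSet D ↑(D.jBelow a) := by
  refine isGaloisLowerSet_iff.2 fun i hi k hik => ?_
  have hk : k ∈ D.jBelow a ∪ D.mAbove a := D.jBelow_union_mAbove_of_mem_spine ha ▸ mem_univ k
  exact (mem_union.1 hk).resolve_right fun hM => hik.1 ((mem_jBelow.1 hi).trans (mem_mAbove.1 hM))

theorem jBelow_sup_j {S : Finset (Fin n)} (hS : IsGaloisLowerSet D ↑S) :
    D.jBelow (S.sup D.j) = S := by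
  refine Subset.antisymm (fun k hk => ?_) fun k hk => mem_jBelow.2 (le_sup hk)
  by_contra hkS
  have hle : S.sup D.j ≤ D.m k := Finset.sup_le fun i hi => not_not.1 fun hik =>
    hkS (isGaloisLowerSet_iff.1 hS i hi k ⟨hik, fun h => hkS (h ▸ hi)⟩)
  exact D.j_not_le_m k ((mem_jBelow.1 hk).trans hle)

theorem sup_j_lt_sup_j {S T : Finset (Fin n)} (hS : IsGaloisLowerSet D ↑S)
    (hT : IsGaloisLowerSet D ↑T) (h : S ⊂ T) : S.sup D.j < T.sup D.j :=
  lt_of_le_of_ne (sup_mono h.subset) fun he => h.ne (by rw [← D.jBelow_sup_j hS,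
    ← D.jBelow_sup_j hT, he])

theorem exists_ltSeries_sup_j {S T : Finset (Fin n)} (hS : IsGaloisLowerSet D ↑S)
    (hT : IsGaloisLowerSet D ↑T) (hST : S ⊆ T) :
    ∃ p : LTSeries L, p.head = S.sup D.j ∧ p.last = T.sup D.j ∧ p.length = #T - #S := by
  by_cases hTS : T ⊆ S
  · obtain rfl := hST.antisymm hTS
    exact ⟨RelSeries.singleton _ (S.sup D.j), rfl, rfl, by simp⟩
  have hne : (T \ S).Nonempty := sdiff_nonempty.2 hTS
  set i := (T \ S).min' hne
  have hi : i ∈ T \ S := min'_mem _ hne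
  have hS' : IsGaloisLowerSet D ↑(insert i S) := by
    rw [coe_insert]
    refine hS.insert hT (mem_sdiff.1 hi).1 fun k hk hki => ?_
    by_contra hkS
    exact (min'_le _ k (mem_sdiff.2 ⟨hk, hkS⟩)).not_gt hki
  obtain ⟨p, hhead, hlast, hlen⟩ :=
    exists_ltSeries_sup_j hS' hT (insert_subset (mem_sdiff.1 hi).1 hST)
  refine ⟨p.cons _ (hhead ▸ D.sup_j_lt_sup_j hS hS' (ssubset_insert (mem_sdiff.1 hi).2)),
    by simp, by simp [hlast], ?_⟩
  have : #S < #T := card_lt_card (ssubset_of_subset_of_ne hST fun h => hTS h.superset)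
  simp only [RelSeries.cons_length, hlen, card_insert_of_notMem (mem_sdiff.1 hi).2]
  omega
termination_by #(T \ S)
decreasing_by
  exact card_lt_card (by rw [sdiff_insert]; exact erase_ssubset hi)

theorem sup_j_mem_spine {S : Finset (Fin n)} (hS : IsGaloisLowerSet D ↑S) :
    S.sup D.j ∈ spine L n := by
  have hempty : IsGaloisLowerSet D ↑(∅ : Finset (Fin n)) := fun _ hi => absurd hi (by simp)
  have huniv : IsGaloisLowerSet D ↑(univ : Finset (Fin n)) := fun _ _ k _ => mem_coe.2 (mem_univ k)
  obtain ⟨p, -, hp, hplen⟩ := D.exists_ltSeries_sup_j hempty hS (empty_subset S)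
  obtain ⟨q, hq, -, hqlen⟩ := D.exists_ltSeries_sup_j hS huniv (subset_univ S)
  rw [← hp]
  refine mem_spine_of_mem_ltSeries (p.smash q (hp.trans hq.symm)) ?_
    ⟨_, RelSeries.smash_castLE _ (Fin.last _)⟩
  have := card_le_univ S
  rw [Fintype.card_fin] at this
  rw [RelSeries.smash_length, hplen, hqlen, card_empty, card_fin]
  omega

theorem mem_spine_iff {a : L} : a ∈ spine L n ↔ IsGaloisLowerSet D ↑(D.jBelow a) :=
  ⟨D.isGaloisLowerSet_jBelow_of_mem_spine, fun h => D.sup_jBelow a ▸ D.sup_j_mem_spine h⟩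

theorem jBelow_inf (a b : L) : D.jBelow (a ⊓ b) = D.jBelow a ∩ D.jBelow b := by
  ext i
  simp

theorem sup_mem_spine (D : ExtremalChainData L n) {a b : L} (ha : a ∈ spine L n)
    (hb : b ∈ spine L n) : a ⊔ b ∈ spine L n := by
  have h := (D.mem_spine_iff.1 ha).union (D.mem_spine_iff.1 hb)
  rw [← coe_union] at h
  simpa only [sup_union, sup_jBelow] using D.sup_j_mem_spine h

theorem inf_mem_spine (D : ExtremalChainData L n) {a b : L} (ha : a ∈ spine L n)
    (hb : b ∈ spine L n) : a ⊓ b ∈ spine L n := by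
  rw [mem_spine_iff, jBelow_inf, coe_inter]
  exact (D.mem_spine_iff.1 ha).inter (D.mem_spine_iff.1 hb)

noncomputable def spineOrderIso :
    {a : L // a ∈ spine L n} ≃o {S : Set (Fin n) // IsGaloisLowerSet D S} :=
  OrderIso.ofSurjective
    (OrderEmbedding.ofMapLEIff (fun a => ⟨↑(D.jBelow a.1), D.mem_spine_iff.1 a.2⟩)
      fun _ _ => coe_subset.trans D.jBelow_subset_jBelow_iff)
    fun ⟨S, hS⟩ => by
      have hT : IsGaloisLowerSet D ↑S.toFinite.toFinset := by rwa [Set.Finite.coe_toFinset]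
      exact ⟨⟨_, D.sup_j_mem_spine hT⟩, Subtype.ext (by simp [D.jBelow_sup_j hT])⟩

end ExtremalChainData

/-- The spine of an extremal lattice is a sublattice (closed under join and
meet) and is a distributive lattice, namely it is order-isomorphic to the
lattice of order ideals of the Galois poset `P(L)` ordered by inclusion. -/
theorem spine_sublattice_iso_ideals {L : Type*} [Lattice L] [Fintype L]
    [BoundedOrder L] {n : ℕ} (D : ExtremalChainData L n) :
    (∀ a b : L, a ∈ spine L n → b ∈ spine L n →
      a ⊔ b ∈ spine L n ∧ a ⊓ b ∈ spine L n) ∧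
    Nonempty ({a : L // a ∈ spine L n} ≃o {S : Set (Fin n) // IsGaloisLowerSet D S}) :=
  ⟨fun _ _ ha hb => ⟨D.sup_mem_spine ha hb, D.inf_mem_spine ha hb⟩, ⟨D.spineOrderIso⟩⟩
end

section
/- Any two maximal-length chains of a finite extremal lattice induce the same bijective correspondence between the join-irreducible elements and the meet-irreducible elements. -/
/-!
Reindex the join- and meet-irreducibles of the second chain by those of the first: this gives
permutations `σ` and `τ` of `Fin n` with `j'ᵢ = j_{σ i}` and `m'ᵢ = m_{τ i}`. Along any
maximal-length chain `jₐ ≤ m_b` whenever `a < b`, while `jₐ ≰ mₐ`; hence `σ i < τ i` would give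
`j'ᵢ ≤ m'ᵢ`, so `τ ≤ σ` pointwise. Two permutations comparable pointwise have the same index sum,
so they coincide.
-/

open Function

theorem Fin.eq_of_bijective_of_forall_le {ι : Type*} [Fintype ι] {n : ℕ} {σ τ : ι → Fin n}
    (hσ : Bijective σ) (hτ : Bijective τ) (h : ∀ i, τ i ≤ σ i) : σ = τ := by
  have hsum : ∑ i, (τ i : ℕ) = ∑ i, (σ i : ℕ) := by
    rw [hτ.sum_comp (fun k : Fin n => (k : ℕ)), hσ.sum_comp (fun k : Fin n => (k : ℕ))]
  have hval := (Finset.sum_eq_sum_iff_of_le fun i _ => Fin.le_iff_val_le_val.1 (h i)).1 hsum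
  funext i
  exact Fin.ext (hval i (Finset.mem_univ _)).symm

theorem Function.Injective.exists_bijective_comp_eq {ι α : Type*} [Finite ι] {f g : ι → α}
    (hf : Injective f) (h : ∀ i, f i ∈ Set.range g) :
    ∃ σ : ι → ι, Bijective σ ∧ ∀ i, g (σ i) = f i := by
  choose σ hσ using h
  refine ⟨σ, Finite.injective_iff_bijective.mp fun a b hab => hf ?_, hσ⟩
  rw [← hσ a, ← hσ b, hab]

namespace ExtremalChainData

variable {L : Type*} [Lattice L] [Fintype L] [BoundedOrder L] {n : ℕ}

theorem x_le_iff (D : ExtremalChainData L n) (i : Fin (n + 1)) (b : L) :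
    D.x i ≤ b ↔ ∀ k : Fin n, (k : ℕ) < i → D.j k ≤ b := by
  simp [D.x_eq_sup i, Finset.sup_le_iff]

theorem le_x_iff (D : ExtremalChainData L n) (i : Fin (n + 1)) (b : L) :
    b ≤ D.x i ↔ ∀ k : Fin n, (i : ℕ) ≤ k → b ≤ D.m k := by
  simp [D.x_eq_inf i, Finset.le_inf_iff]

theorem j_le_x_succ_s5 (D : ExtremalChainData L n) (a : Fin n) : D.j a ≤ D.x a.succ :=
  (D.x_le_iff _ _).1 le_rfl a (by simp)

theorem x_le_m (D : ExtremalChainData L n) {i : Fin (n + 1)} {b : Fin n}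
    (h : (i : ℕ) ≤ b) : D.x i ≤ D.m b :=
  (D.le_x_iff _ _).1 le_rfl b h

theorem j_le_m_of_lt_s5 (D : ExtremalChainData L n) {a b : Fin n} (h : a < b) :
    D.j a ≤ D.m b :=
  (D.j_le_x_succ_s5 a).trans (D.x_le_m (by simpa using h))

theorem not_j_le_m_self (D : ExtremalChainData L n) (a : Fin n) : ¬ D.j a ≤ D.m a := by
  intro h
  have hsucc_le : D.x a.succ ≤ D.x a.castSucc := by
    refine (D.le_x_iff _ _).2 fun k hk => ?_
    rcases (show a ≤ k by simpa using hk).lt_or_eq with hak | rfl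
    · exact D.x_le_m (by simpa using hak)
    · refine (D.x_le_iff _ _).2 fun l hl => ?_
      rcases (show l ≤ a by simpa [Nat.lt_succ_iff] using hl).lt_or_eq with hla | rfl
      · exact D.j_le_m_of_lt_s5 hla
      · exact h
  exact hsucc_le.not_gt (D.x_strictMono Fin.castSucc_lt_succ)

end ExtremalChainData

/-- Any two maximal-length chains of an extremal lattice induce the same
correspondence between join-irreducibles and meet-irreducibles: if a
join-irreducible receives index `i` in the numbering from one chain and index
`i'` in the numbering from another, then the paired meet-irreducibles agree. -/
theorem same_correspondence {L : Type*} [Lattice L] [Fintype L] [BoundedOrder L]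
    {n : ℕ} (D D' : ExtremalChainData L n) :
    ∀ i i' : Fin n, D.j i = D'.j i' → D.m i = D'.m i' := by
  obtain ⟨σ, hσ, hjσ⟩ := D'.j_inj.exists_bijective_comp_eq fun i => D.j_surj _ (D'.j_irr i)
  obtain ⟨τ, hτ, hmτ⟩ := D'.m_inj.exists_bijective_comp_eq fun i => D.m_surj _ (D'.m_irr i)
  have hτσ : ∀ i, τ i ≤ σ i := fun i => not_lt.1 fun hlt =>
    D'.not_j_le_m_self i (hjσ i ▸ hmτ i ▸ D.j_le_m_of_lt_s5 hlt)
  have hστ := Fin.eq_of_bijective_of_forall_le hσ hτ hτσ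
  intro i i' hj
  have hσi : σ i' = i := D.j_inj ((hjσ i').trans hj.symm)
  rw [← hmτ i', ← congrFun hστ i', hσi]
end

section
/- Given any finite directed graph G on vertex set [n] with no multiple edges such that every edge i → k satisfies i > k, the set of maximal orthogonal pairs of G, ordered by inclusion of the first component (equivalently, reverse inclusion of the second component), forms an extremal lattice of length n; join is computed by intersecting second components and meet by intersecting first components. -/
/-- `(X, Y)` is an orthogonal pair for the directed graph `E` on `[n]`:
`X` and `Y` are disjoint and no edge goes from a vertex of `X` to one of `Y`. -/
def Orth (n : ℕ) (E : Fin n → Fin n → Prop) (X Y : Finset (Fin n)) : Prop :=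
  Disjoint X Y ∧ ∀ i ∈ X, ∀ k ∈ Y, ¬ E i k

/-- A maximal orthogonal pair: both components are maximal. -/
def MaxOrth (n : ℕ) (E : Fin n → Fin n → Prop)
    (p : Finset (Fin n) × Finset (Fin n)) : Prop :=
  Orth n E p.1 p.2 ∧
  (∀ X', p.1 ⊆ X' → Orth n E X' p.2 → X' = p.1) ∧
  (∀ Y', p.2 ⊆ Y' → Orth n E p.1 Y' → Y' = p.2)

/-- The set of maximal orthogonal pairs of `E`. -/
def MOP (n : ℕ) (E : Fin n → Fin n → Prop) :=
  {p : Finset (Fin n) × Finset (Fin n) // MaxOrth n E p}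

/-- Maximal orthogonal pairs, ordered by inclusion of first components
(equivalently, reverse inclusion of second components). -/
instance (n : ℕ) (E : Fin n → Fin n → Prop) : PartialOrder (MOP n E) where
  le a b := a.1.1 ⊆ b.1.1 ∧ b.1.2 ⊆ a.1.2
  le_refl a := ⟨subset_rfl, subset_rfl⟩
  le_trans a b c h1 h2 := ⟨h1.1.trans h2.1, h2.2.trans h1.2⟩
  le_antisymm a b h1 h2 := Subtype.ext
    (Prod.ext (subset_antisymm h1.1 h2.1) (subset_antisymm h2.2 h1.2))

/-- A join-irreducible element of a partial order: not minimal, and not the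
least upper bound of two strictly smaller elements. -/
def OrderSupIrred {α : Type*} [PartialOrder α] (a : α) : Prop :=
  ¬ IsMin a ∧ ∀ b c : α, IsLUB {b, c} a → b = a ∨ c = a

/-- A meet-irreducible element of a partial order. -/
def OrderInfIrred {α : Type*} [PartialOrder α] (a : α) : Prop :=
  ¬ IsMax a ∧ ∀ b c : α, IsGLB {b, c} a → b = a ∨ c = a


/-!
Orthogonality of `(X, Y)` says that every pair in `X × Y` satisfies the irreflexive relation
`i ≠ k ∧ ¬ E i k`, so maximal orthogonal pairs are exactly the formal concepts of this
relation: they form its concept lattice, where joins intersect intents and meets intersect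
extents.
Since edges only go downwards, the relation holds whenever `i < k`. Hence every initial segment of
`[n]` is an extent, with its complement as intent, giving a chain of length `n`; extents strictly
grow along any chain, which bounds its length by `n`. The relation is moreover trichotomous, so any
concept strictly below the object concept of `v` has `v` in its intent while the object concept
does not: object concepts are join-irreducible and pairwise distinct. Every concept is the join of
the object concepts of its extent, so there are no other join-irreducibles. Swapping the relation
turns meets into joins.
-/

open Set Function

section Irreducible

variable {α β : Type*}

theorem orderSupIrred_iff_supIrred [Lattice α] {a : α} : OrderSupIrred a ↔ SupIrred a :=
  and_congr_right fun _ =>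
    ⟨fun h _ _ hbc => h _ _ (hbc ▸ isLUB_pair), fun h _ _ hlub => h (isLUB_pair.unique hlub)⟩

theorem OrderIso.orderSupIrred_apply [PartialOrder α] [PartialOrder β] (e : α ≃o β) {a : α} :
    OrderSupIrred (e a) ↔ OrderSupIrred a := by
  unfold OrderSupIrred
  rw [e.isMin_apply, e.surjective.forall₂]
  simp only [← Set.image_pair, e.isLUB_image', e.apply_eq_iff_eq]

theorem Nat.card_orderSupIrred_congr [PartialOrder α] [PartialOrder β] (e : α ≃o β) :
    Nat.card {a : α // OrderSupIrred a} = Nat.card {b : β // OrderSupIrred b} :=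
  Nat.card_congr (e.toEquiv.subtypeEquiv fun _ => e.orderSupIrred_apply.symm)

theorem Nat.card_orderInfIrred_congr [PartialOrder α] [PartialOrder β] (e : αᵒᵈ ≃o β) :
    Nat.card {a : α // OrderInfIrred a} = Nat.card {b : β // OrderSupIrred b} :=
  Nat.card_orderSupIrred_congr e

end Irreducible

namespace Concept

variable {α β : Type*}

section General

variable {r : α → β → Prop}

theorem mem_extent_ofObject (a : α) : a ∈ (ofObject r a).extent :=
  subset_lowerPolar_upperPolar r {a} (mem_singleton a)

theorem iSup_ofObject_extent (c : Concept α β r) : ⨆ a ∈ c.extent, ofObject r a = c := by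
  refine le_antisymm (iSup₂_le fun a ha => ofObjects_le_iff.2 (singleton_subset_iff.2 ha)) ?_
  intro a ha
  exact extent_subset_extent_iff.2 (le_iSup₂_of_le a ha le_rfl) (mem_extent_ofObject a)

theorem exists_ofObject_eq_of_supIrred [Finite α] {c : Concept α β r} (hc : SupIrred c) :
    ∃ a, ofObject r a = c := by
  classical
  have := Fintype.ofFinite α
  obtain ⟨a, -, ha⟩ := hc.finset_sup_eq (s := c.extent.toFinset) (f := ofObject r)
    (by simpa [Finset.sup_eq_iSup] using c.iSup_ofObject_extent)
  exact ⟨a, ha⟩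

theorem le_card_of_strictMono [Finite α] {m : ℕ} {c : Fin (m + 1) → Concept α β r}
    (hc : StrictMono c) : m ≤ Nat.card α := by
  have hinj : Injective fun i => (⟨(c i).extent.ncard, Nat.lt_succ_of_le (ncard_le_card _)⟩ :
      Fin (Nat.card α + 1)) := fun i j h =>
    (ncard_strictMono.comp (strictMono_extent.comp hc)).injective (congrArg Fin.val h)
  simpa using Fintype.card_le_of_injective _ hinj

end General

section Irreflexive

variable {r : α → α → Prop} [Std.Irrefl r]

theorem notMem_intent_ofObject (a : α) : a ∉ (ofObject r a).intent :=
  fun h => irrefl a ((mem_upperPolar_singleton r).1 h)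

variable [Std.Trichotomous r]

theorem mem_intent_of_lt_ofObject {a : α} {c : Concept α α r} (hc : c < ofObject r a) :
    a ∈ c.intent := by
  by_contra ha
  have ha' : a ∉ c.extent := fun h => hc.not_ge (ofObjects_le_iff.2 (singleton_subset_iff.2 h))
  rw [← c.upperPolar_extent, mem_upperPolar_iff] at ha
  push Not at ha
  obtain ⟨x, hx, hxa⟩ := ha
  have hax : r a x := by_contra fun hax => ha' (Std.Trichotomous.trichotomous x a hxa hax ▸ hx)
  exact irrefl x (rel_extent_intent (extent_subset_extent_iff.2 hc.le hx)
    ((mem_upperPolar_singleton r).2 hax))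

theorem supIrred_ofObject (a : α) : SupIrred (ofObject r a) := by
  refine ⟨fun hmin => ?_, fun b c hbc => ?_⟩
  · exact irrefl (r := r) a (rel_extent_intent (extent_subset_extent_iff.2 (hmin bot_le)
      (mem_extent_ofObject a)) (by simp : a ∈ (⊥ : Concept α α r).intent))
  · by_contra! h
    have hb : b < ofObject r a := (hbc ▸ le_sup_left).lt_of_ne h.1
    have hc : c < ofObject r a := (hbc ▸ le_sup_right).lt_of_ne h.2
    apply notMem_intent_ofObject (r := r) a
    rw [← hbc, intent_sup]
    exact ⟨mem_intent_of_lt_ofObject hb, mem_intent_of_lt_ofObject hc⟩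

theorem ofObject_injective : Injective (ofObject r) := fun a b h =>
  Std.Trichotomous.trichotomous a b
    (fun hab => notMem_intent_ofObject (r := r) b
      (by rw [← h]; exact (mem_upperPolar_singleton r).2 hab))
    (fun hba => notMem_intent_ofObject (r := r) a
      (by rw [h]; exact (mem_upperPolar_singleton r).2 hba))

theorem card_supIrred [Finite α] : Nat.card {c : Concept α α r // SupIrred c} = Nat.card α :=
  (Nat.card_congr (Equiv.ofBijective
    (fun a => (⟨ofObject r a, supIrred_ofObject a⟩ : {c : Concept α α r // SupIrred c}))
    ⟨fun _ _ h => ofObject_injective (congrArg Subtype.val h),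
     fun ⟨_, hc⟩ => (exists_ofObject_eq_of_supIrred hc).imp fun _ ha => Subtype.ext ha⟩)).symm

end Irreflexive

def ofIsLowerSet [LinearOrder α] {r : α → α → Prop} [Std.Irrefl r]
    (hlt : ∀ ⦃i k⦄, i < k → r i k) {s : Set α} (hs : IsLowerSet s) : Concept α α r where
  extent := s
  intent := sᶜ
  upperPolar_extent := by
    ext k
    refine ⟨fun h hk => irrefl k (h hk), fun hk i hi => hlt ?_⟩
    exact lt_of_not_ge fun hki => hk (hs hki hi)
  lowerPolar_intent := by
    ext i
    refine ⟨fun h => not_not.1 fun hi => irrefl i (h hi), fun hi k hk => hlt ?_⟩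
    exact lt_of_not_ge fun hki => hk (hs hki hi)

theorem exists_strictMono_fin {n : ℕ} {r : Fin n → Fin n → Prop} [Std.Irrefl r]
    (hlt : ∀ ⦃i k⦄, i < k → r i k) :
    ∃ c : Fin (n + 1) → Concept (Fin n) (Fin n) r, StrictMono c := by
  refine ⟨fun j => ofIsLowerSet hlt (s := {i : Fin n | (i : ℕ) < j})
    fun _ _ hba hb => Nat.lt_of_le_of_lt hba hb, fun j j' hjj' => ?_⟩
  have hjn : (j : ℕ) < n := by omega
  rw [← extent_ssubset_extent_iff]
  exact (Set.ssubset_iff_of_subset fun (i : Fin n) (hi : (i : ℕ) < j) => hi.trans hjj').2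
    ⟨⟨j, hjn⟩, hjj', lt_irrefl (j : ℕ)⟩

end Concept

def orthRel {α : Type*} (E : α → α → Prop) (i k : α) : Prop :=
  i ≠ k ∧ ¬ E i k

instance {α : Type*} (E : α → α → Prop) : Std.Irrefl (orthRel E) :=
  ⟨fun _ h => h.1 rfl⟩

section Orth

variable {n : ℕ} {E : Fin n → Fin n → Prop}

theorem orthRel_of_lt (hE : ∀ i k, E i k → (k : ℕ) < (i : ℕ)) {i k : Fin n} (h : i < k) :
    orthRel E i k :=
  ⟨h.ne, fun hik => (hE i k hik).not_gt h⟩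

theorem orthRel_trichotomous (hE : ∀ i k, E i k → (k : ℕ) < (i : ℕ)) :
    Std.Trichotomous (orthRel E) :=
  ⟨fun i k hik hki => by
    rcases lt_trichotomy i k with h | h | h
    · exact absurd (orthRel_of_lt hE h) hik
    · exact h
    · exact absurd (orthRel_of_lt hE h) hki⟩

theorem orth_iff_subset_upperPolar {X Y : Finset (Fin n)} :
    Orth n E X Y ↔ (Y : Set (Fin n)) ⊆ upperPolar (orthRel E) X :=
  ⟨fun h _ hk i hi => ⟨fun hik => Finset.disjoint_left.1 h.1 hi (hik ▸ hk), h.2 i hi _ hk⟩,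
   fun h => ⟨Finset.disjoint_left.2 fun _ hi hiY => (h hiY hi).1 rfl,
     fun _ hi _ hk => (h hk hi).2⟩⟩

theorem orth_iff_subset_lowerPolar {X Y : Finset (Fin n)} :
    Orth n E X Y ↔ (X : Set (Fin n)) ⊆ lowerPolar (orthRel E) Y :=
  orth_iff_subset_upperPolar.trans subset_upperPolar_iff_subset_lowerPolar

theorem maxOrth_iff {p : Finset (Fin n) × Finset (Fin n)} :
    MaxOrth n E p ↔ upperPolar (orthRel E) p.1 = p.2 ∧ lowerPolar (orthRel E) p.2 = p.1 := by
  classical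
  constructor
  · rintro ⟨h, hX, hY⟩
    refine ⟨?_, ?_⟩
    · have := hY (upperPolar (orthRel E) p.1).toFinset
        (fun k hk => by simpa using orth_iff_subset_upperPolar.1 h hk)
        (orth_iff_subset_upperPolar.2 (by simp))
      rw [← this, coe_toFinset]
    · have := hX (lowerPolar (orthRel E) p.2).toFinset
        (fun i hi => by simpa using orth_iff_subset_lowerPolar.1 h hi)
        (orth_iff_subset_lowerPolar.2 (by simp))
      rw [← this, coe_toFinset]
  · rintro ⟨hup, hlow⟩
    refine ⟨orth_iff_subset_upperPolar.2 hup.ge, fun X' hX' h => ?_, fun Y' hY' h => ?_⟩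
    · exact hX'.antisymm' (Finset.coe_subset.1 (hlow ▸ orth_iff_subset_lowerPolar.1 h))
    · exact hY'.antisymm' (Finset.coe_subset.1 (hup ▸ orth_iff_subset_upperPolar.1 h))

end Orth

namespace MOP

variable {n : ℕ} {E : Fin n → Fin n → Prop}

open scoped Classical in
noncomputable def toConcept : MOP n E ≃o Concept (Fin n) (Fin n) (orthRel E) where
  toFun a := ⟨a.1.1, a.1.2, (maxOrth_iff.1 a.2).1, (maxOrth_iff.1 a.2).2⟩
  invFun c := ⟨(c.extent.toFinset, c.intent.toFinset), maxOrth_iff.2 (by simp)⟩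
  left_inv a := Subtype.ext (Prod.ext (by simp) (by simp))
  right_inv c := by ext; simp
  map_rel_iff' {a b} :=
    ⟨fun h => ⟨Finset.coe_subset.1 (Concept.extent_subset_extent_iff.2 h),
      Finset.coe_subset.1 (Concept.intent_subset_intent_iff.2 h)⟩,
     fun h => Concept.extent_subset_extent_iff.1 (Finset.coe_subset.2 h.1)⟩

theorem extent_toConcept (a : MOP n E) : (toConcept a).extent = a.1.1 := rfl

theorem intent_toConcept (a : MOP n E) : (toConcept a).intent = a.1.2 := rfl

theorem le_iff_fst_subset {a b : MOP n E} : a ≤ b ↔ a.1.1 ⊆ b.1.1 :=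
  toConcept.le_iff_le.symm.trans (Concept.extent_subset_extent_iff.symm.trans Finset.coe_subset)

theorem le_iff_snd_subset {a b : MOP n E} : a ≤ b ↔ b.1.2 ⊆ a.1.2 :=
  toConcept.le_iff_le.symm.trans (Concept.intent_subset_intent_iff.symm.trans Finset.coe_subset)

theorem exists_isLUB_snd_eq_inter (a b : MOP n E) :
    ∃ s : MOP n E, IsLUB {a, b} s ∧ s.1.2 = a.1.2 ∩ b.1.2 := by
  refine ⟨toConcept.symm (toConcept a ⊔ toConcept b), ?_, Finset.coe_injective ?_⟩
  · rw [← toConcept.isLUB_image', Set.image_pair, OrderIso.apply_symm_apply]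
    exact isLUB_pair
  · rw [Finset.coe_inter, ← intent_toConcept, OrderIso.apply_symm_apply, Concept.intent_sup]
    rfl

theorem exists_isGLB_fst_eq_inter (a b : MOP n E) :
    ∃ s : MOP n E, IsGLB {a, b} s ∧ s.1.1 = a.1.1 ∩ b.1.1 := by
  refine ⟨toConcept.symm (toConcept a ⊓ toConcept b), ?_, Finset.coe_injective ?_⟩
  · rw [← toConcept.isGLB_image', Set.image_pair, OrderIso.apply_symm_apply]
    exact isGLB_pair
  · rw [Finset.coe_inter, ← extent_toConcept, OrderIso.apply_symm_apply, Concept.extent_inf]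
    rfl

theorem exists_strictMono_fin (hE : ∀ i k, E i k → (k : ℕ) < (i : ℕ)) :
    ∃ c : Fin (n + 1) → MOP n E, StrictMono c :=
  let ⟨c, hc⟩ := Concept.exists_strictMono_fin fun _ _ => orthRel_of_lt hE
  ⟨toConcept.symm ∘ c, toConcept.symm.strictMono.comp hc⟩

theorem le_of_strictMono_fin {m : ℕ} {c : Fin (m + 1) → MOP n E} (hc : StrictMono c) :
    m ≤ n := by
  simpa using Concept.le_card_of_strictMono (toConcept.strictMono.comp hc)

theorem card_orderSupIrred (hE : ∀ i k, E i k → (k : ℕ) < (i : ℕ)) :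
    Nat.card {a : MOP n E // OrderSupIrred a} = n := by
  have := orthRel_trichotomous hE
  simp_rw [Nat.card_orderSupIrred_congr toConcept, orderSupIrred_iff_supIrred,
    Concept.card_supIrred, Nat.card_fin]

theorem card_orderInfIrred (hE : ∀ i k, E i k → (k : ℕ) < (i : ℕ)) :
    Nat.card {a : MOP n E // OrderInfIrred a} = n := by
  have := orthRel_trichotomous hE
  simp_rw [Nat.card_orderInfIrred_congr (toConcept.dual.trans Concept.swapEquiv),
    orderSupIrred_iff_supIrred, Concept.card_supIrred, Nat.card_fin]

end MOP

/-- Given a directed graph on `[n]` (no multiple edges, every edge going from a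
larger to a smaller vertex), the maximal orthogonal pairs, ordered by inclusion
of first components (equivalently, reverse inclusion of second components), form
a lattice, with joins computed by intersecting second components and meets by
intersecting first components; this lattice is extremal of length `n`. -/
theorem maxOrthogonalPairs_extremal_lattice (n : ℕ) (E : Fin n → Fin n → Prop)
    (hE : ∀ i k, E i k → (k : ℕ) < (i : ℕ)) :
    (∀ a b : MOP n E, a ≤ b ↔ a.1.1 ⊆ b.1.1) ∧
    (∀ a b : MOP n E, a ≤ b ↔ b.1.2 ⊆ a.1.2) ∧
    (∀ a b : MOP n E, ∃ s : MOP n E, IsLUB {a, b} s ∧ s.1.2 = a.1.2 ∩ b.1.2) ∧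
    (∀ a b : MOP n E, ∃ s : MOP n E, IsGLB {a, b} s ∧ s.1.1 = a.1.1 ∩ b.1.1) ∧
    (∃ c : Fin (n + 1) → MOP n E, StrictMono c) ∧
    (∀ (m : ℕ) (c : Fin (m + 1) → MOP n E), StrictMono c → m ≤ n) ∧
    Nat.card {a : MOP n E // OrderSupIrred a} = n ∧
    Nat.card {a : MOP n E // OrderInfIrred a} = n :=
  ⟨fun _ _ => MOP.le_iff_fst_subset, fun _ _ => MOP.le_iff_snd_subset,
    MOP.exists_isLUB_snd_eq_inter, MOP.exists_isGLB_fst_eq_inter, MOP.exists_strictMono_fin hE,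
    fun _ _ => MOP.le_of_strictMono_fin, MOP.card_orderSupIrred hE, MOP.card_orderInfIrred hE⟩
end

section
/- In a trim lattice L with left modular labelling γ, every element x satisfies x = ⋁_{i ∈ D^γ(x)} j_i = ⋀_{i ∈ U^γ(x)} m_i; in particular x is determined by its set of downward labels, and also by its set of upward labels. -/
/-!
If `i` labels the cover `y ⋖ z`, then `y ⊔ jᵢ = z`: some join-irreducible `w ≤ xᵢ ⊓ z` already
has `y ⊔ w = z`, and the minimality of the label together with the way the chain indexes the `jₖ`
forces `w = jᵢ`. Dually, left modularity of `x_{i-1}` gives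
`(y ⊔ x_{i-1}) ⊓ z = y`; some meet-irreducible `w ≥ y ⊔ x_{i-1}` still has `z ⊓ w = y`, and it is
forced to be `mᵢ`, so `z ⊓ mᵢ = y`. Now if `⋁_{i ∈ D(a)} jᵢ < a`, pick a cover `y ⋖ a` above it;
its label `i` lies in `D(a)`, so `jᵢ ≤ y`, contradicting `y ⊔ jᵢ = a`. The meet over `U(a)` is
handled dually.
-/

section CoverIrreducible

variable {α : Type*} [Lattice α] {y z : α}

theorem CovBy.exists_supIrred_le_sup_eq [OrderBot α] [WellFoundedLT α] {u : α} (h : y ⋖ z)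
    (hu : y ⊔ u = z) : ∃ w, SupIrred w ∧ w ≤ u ∧ y ⊔ w = z := by
  obtain ⟨s, rfl, hs⟩ := exists_supIrred_decomposition u
  by_contra! hne
  -- `y ≤ y ⊔ b ≤ z` for each part `b` of `u`, so `y ⊔ b = y` as it is not `z`
  have hsy : s.sup id ≤ y := Finset.sup_le fun b hb =>
    have hbz : y ⊔ b ≤ z := hu ▸ sup_le_sup_left (Finset.le_sup (f := id) hb) y
    le_sup_right.trans ((h.eq_or_eq le_sup_left hbz).resolve_right
      (hne b (hs hb) (Finset.le_sup (f := id) hb))).le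
  exact h.lt.ne (hu ▸ (sup_eq_left.2 hsy).symm)

theorem CovBy.exists_infIrred_ge_inf_eq [OrderTop α] [WellFoundedGT α] {v : α} (h : y ⋖ z)
    (hv : z ⊓ v = y) : ∃ w, InfIrred w ∧ v ≤ w ∧ z ⊓ w = y :=
  (toDual_covBy_toDual_iff.2 h).exists_supIrred_le_sup_eq (α := αᵒᵈ) hv

end CoverIrreducible

namespace ExtremalChainData

variable {L : Type*} [Lattice L] [Fintype L] [BoundedOrder L] {n : ℕ}
  (D : ExtremalChainData L n)

theorem x_succ_eq (i : Fin n) : D.x i.succ = D.x i.castSucc ⊔ D.j i := by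
  have hset : (Finset.univ.filter fun k : Fin n => (k : ℕ) < (i.succ : ℕ))
      = insert i (Finset.univ.filter fun k : Fin n => (k : ℕ) < (i.castSucc : ℕ)) := by
    ext k
    simp only [Finset.mem_filter, Finset.mem_insert, Finset.mem_univ, true_and,
      Fin.val_succ, Fin.val_castSucc, Fin.ext_iff]
    omega
  rw [D.x_eq_sup, D.x_eq_sup i.castSucc, hset, Finset.sup_insert, sup_comm]

theorem x_castSucc_eq (i : Fin n) : D.x i.castSucc = D.m i ⊓ D.x i.succ := by
  have hset : (Finset.univ.filter fun k : Fin n => (i.castSucc : ℕ) ≤ (k : ℕ))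
      = insert i (Finset.univ.filter fun k : Fin n => (i.succ : ℕ) ≤ (k : ℕ)) := by
    ext k
    simp only [Finset.mem_filter, Finset.mem_insert, Finset.mem_univ, true_and,
      Fin.val_succ, Fin.val_castSucc, Fin.ext_iff]
    omega
  rw [D.x_eq_inf, D.x_eq_inf i.succ, hset, Finset.inf_insert]

theorem j_le_x_iff {k : Fin n} {t : Fin (n + 1)} : D.j k ≤ D.x t ↔ k.castSucc < t := by
  refine ⟨fun hle => lt_of_not_ge fun htk => ?_, fun hkt => ?_⟩
  · have hlt := D.x_strictMono (Fin.castSucc_lt_succ (i := k))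
    rw [D.x_succ_eq, sup_eq_left.2 (hle.trans (D.x_strictMono.monotone htk))] at hlt
    exact hlt.false
  · exact (D.x_succ_eq k ▸ le_sup_right).trans
      (D.x_strictMono.monotone (Fin.castSucc_lt_iff_succ_le.1 hkt))

theorem x_le_m_iff {k : Fin n} {t : Fin (n + 1)} : D.x t ≤ D.m k ↔ t ≤ k.castSucc := by
  refine ⟨fun hle => le_of_not_gt fun hkt => ?_, fun htk => ?_⟩
  · have hlt := D.x_strictMono (Fin.castSucc_lt_succ (i := k))
    rw [D.x_castSucc_eq,
      inf_eq_right.2 ((D.x_strictMono.monotone (Fin.castSucc_lt_iff_succ_le.1 hkt)).trans hle)]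
      at hlt
    exact hlt.false
  · exact (D.x_strictMono.monotone htk).trans (D.x_castSucc_eq k ▸ inf_le_left)

variable {D} {y z : L} {i : Fin n}

theorem IsLabel.sup_j_eq (hl : D.IsLabel y z i) (h : y ⋖ z) : y ⊔ D.j i = z := by
  obtain ⟨w, hw, hwx, hyw⟩ := h.exists_supIrred_le_sup_eq hl.1
  obtain ⟨k, rfl⟩ := D.j_surj w hw
  have hki : k ≤ i := Fin.castSucc_lt_succ_iff.1 (D.j_le_x_iff.1 (hwx.trans inf_le_left))
  have hjk : D.j k ≤ D.x k.succ ⊓ z :=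
    le_inf (D.j_le_x_iff.2 Fin.castSucc_lt_succ) (hwx.trans inf_le_right)
  have hik : i ≤ k :=
    hl.2 k (le_antisymm (sup_le h.le inf_le_right) (hyw.ge.trans (sup_le_sup_left hjk y)))
  rwa [le_antisymm hik hki]

theorem IsLabel.x_castSucc_inf_le (hl : D.IsLabel y z i) (h : y ⋖ z) :
    D.x i.castSucc ⊓ z ≤ y := by
  obtain h0 | ⟨k, hk⟩ := Fin.eq_zero_or_eq_succ i.castSucc
  · rw [h0, D.x_bot, bot_inf_eq]
    exact bot_le
  · have hki : k < i := by
      rw [Fin.ext_iff, Fin.val_castSucc, Fin.val_succ] at hk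
      rw [Fin.lt_def]
      omega
    rw [hk]
    exact le_sup_right.trans ((h.eq_or_eq le_sup_left (sup_le h.le inf_le_right)).resolve_right
      fun hz => hki.not_ge (hl.2 k hz)).le

theorem IsLabel.inf_m_eq (hD : D.IsTrim) (hl : D.IsLabel y z i) (h : y ⋖ z) :
    z ⊓ D.m i = y := by
  have hv : z ⊓ (y ⊔ D.x i.castSucc) = y := by
    rw [inf_comm, hD i.castSucc y z h.le]
    exact sup_eq_left.2 (hl.x_castSucc_inf_le h)
  obtain ⟨w, hw, hvw, hzw⟩ := h.exists_infIrred_ge_inf_eq hv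
  obtain ⟨k, rfl⟩ := D.m_surj w hw
  have hik : i ≤ k := Fin.castSucc_le_castSucc_iff.1 (D.x_le_m_iff.1 (le_sup_right.trans hvw))
  have hki : ¬ i < k := fun hlt => by
    have hxz : D.x i.succ ⊓ z ≤ y := calc
      D.x i.succ ⊓ z ≤ D.m k ⊓ z :=
        inf_le_inf_right z (D.x_le_m_iff.2 (Fin.succ_le_castSucc_iff.2 hlt))
      _ = y := by rw [inf_comm, hzw]
    exact h.lt.ne ((sup_eq_left.2 hxz).symm.trans hl.1)
  rwa [← le_antisymm hik (not_lt.1 hki)] at hzw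

variable (D)

theorem exists_isLabel (h : y ⋖ z) : ∃ i, D.IsLabel y z i := by
  classical
  let C := Finset.univ.filter fun i : Fin n => y ⊔ (D.x i.succ ⊓ z) = z
  have hC : C.Nonempty := by
    obtain _ | m := n
    · have : Subsingleton L := subsingleton_of_bot_eq_top (D.x_bot.symm.trans D.x_top)
      exact absurd (Subsingleton.elim y z) h.lt.ne
    · exact ⟨Fin.last m, by simp [C, Fin.succ_last, D.x_top, h.le]⟩
  exact ⟨C.min' hC, (Finset.mem_filter.1 (C.min'_mem hC)).2,
    fun k hk => C.min'_le k (by simp [C, hk])⟩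

theorem mem_downLabels {a : L} : i ∈ D.downLabels a ↔ ∃ y, y ⋖ a ∧ D.IsLabel y a i := by
  classical
  simp [downLabels]

theorem mem_upLabels {a : L} : i ∈ D.upLabels a ↔ ∃ z, a ⋖ z ∧ D.IsLabel a z i := by
  classical
  simp [upLabels]

theorem sup_downLabels (a : L) : (D.downLabels a).sup D.j = a := by
  refine (Finset.sup_le fun i hi => ?_).eq_of_not_lt fun hlt => ?_
  · obtain ⟨y, hy, hl⟩ := D.mem_downLabels.1 hi
    exact hl.sup_j_eq hy ▸ le_sup_right
  · obtain ⟨y, hsy, hy⟩ := exists_le_covBy_of_lt hlt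
    obtain ⟨i, hl⟩ := D.exists_isLabel hy
    have hjy : D.j i ≤ y := (Finset.le_sup (D.mem_downLabels.2 ⟨y, hy, hl⟩)).trans hsy
    exact hy.lt.ne ((sup_eq_left.2 hjy).symm.trans (hl.sup_j_eq hy))

theorem inf_upLabels (hD : D.IsTrim) (a : L) : (D.upLabels a).inf D.m = a := by
  refine (Finset.le_inf fun i hi => ?_).eq_of_not_lt' fun hlt => ?_
  · obtain ⟨z, hz, hl⟩ := D.mem_upLabels.1 hi
    exact hl.inf_m_eq hD hz ▸ inf_le_right
  · obtain ⟨z, hz, hzs⟩ := exists_covBy_le_of_lt hlt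
    obtain ⟨i, hl⟩ := D.exists_isLabel hz
    have hzm : z ≤ D.m i := hzs.trans (Finset.inf_le (D.mem_upLabels.2 ⟨z, hz, hl⟩))
    exact hz.lt.ne' ((inf_eq_left.2 hzm).symm.trans (hl.inf_m_eq hD hz))

end ExtremalChainData

open ExtremalChainData

/-- In a trim lattice, every element `a` satisfies
`a = ⋁_{i ∈ D^γ(a)} jᵢ = ⋀_{i ∈ U^γ(a)} mᵢ`; in particular each element is
determined by its downward labels, and by its upward labels. -/
theorem element_from_labels {L : Type*} [Lattice L] [Fintype L] [BoundedOrder L]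
    {n : ℕ} (D : ExtremalChainData L n) (hD : D.IsTrim) :
    ∀ a : L,
      a = (D.downLabels a).sup D.j ∧
      a = (D.upLabels a).inf D.m ∧
      (∀ b : L, D.downLabels b = D.downLabels a → b = a) ∧
      (∀ b : L, D.upLabels b = D.upLabels a → b = a) := by
  intro a
  refine ⟨(D.sup_downLabels a).symm, (D.inf_upLabels hD a).symm, fun b hb => ?_, fun b hb => ?_⟩
  · rw [← D.sup_downLabels b, hb, D.sup_downLabels]
  · rw [← D.inf_upLabels hD b, hb, D.inf_upLabels hD]
end
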